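/- For every prime power q and every h with (h-i) | h or (h-i+1) | h (with appropriate divisibility and i in range), there exists an F_q-linear i-club of rank h in PG(1, q^h). In particular: if h - i divides h there is an i-club of rank h, and if h - i + 1 divides h there is an i-club of rank h. -/

import Mathlib

open Projectivization Module

noncomputable def weightOf (K L : Type*) [Field K] [Field L] [Algebra K L]
    (W : Submodule K (L × L)) (P : Projectivization L (L × L)) : ℕ :=
  Module.finrank K (W ⊓ (P.submodule.restrictScalars K) : Submodule K (L × L))

def linearSetOf (K L : Type*) [Field K] [Field L] [Algebra K L]
    (W : Submodule K (L × L)) : Set (Projectivization L (L × L)) :=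
  {P | ∃ v : L × L, ∃ hv : v ≠ 0, v ∈ W ∧ P = Projectivization.mk L v hv}

/-!
An `i`-club of rank `h` is obtained as the graph `{(x, f x)}` of an `F_q`-linear map
`f : F_{q^h} → F_{q^h}` with an `i`-dimensional kernel: the point `⟨(1, 0)⟩` has weight
`dim ker f`, and a point `⟨(x, f x)⟩` with `f x ≠ 0` has weight `dim {λ | f (λ x) = λ f x}`, which
is `1` as soon as this space is `F_q`.

For `t ∣ h` let `T = Tr_{q^h/q^t}` and `f_c(x) = T(x)^q - c T(x)` with `c ∈ {0, 1}`. Since `T` is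
`F_{q^t}`-linear onto `F_{q^t}` and `f_c` takes values in `F_{q^t}`, any `λ` with
`f_c(λ x) = λ f_c(x) ≠ 0` lies in `F_{q^t}`, and then `f_c(λ x) - λ f_c(x) = (λ^q - λ) T(x)^q`
forces `λ ∈ F_q`. The kernel of `f_c` is `T⁻¹(c F_q)`, of dimension `h - t + c`, which gives the
two cases `t = h - i` and `t = h - i + 1`.
-/

open Polynomial

section Club

variable {K L : Type*} [Field K] [Field L] [Algebra K L]

def IsLinearClub (W : Submodule K (L × L)) (i : ℕ) : Prop :=
  ∃ N ∈ linearSetOf K L W, weightOf K L W N = i ∧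
    ∀ P ∈ linearSetOf K L W, P ≠ N → weightOf K L W P = 1

theorem LinearMap.finrank_graph (f : L →ₗ[K] L) : finrank K f.graph = finrank K L := by
  rw [LinearMap.graph_eq_range_prod, LinearMap.finrank_range_of_inj]
  exact fun a b h => congrArg Prod.fst h

theorem weightOf_mk (W : Submodule K (L × L)) (v : L × L) (hv : v ≠ 0) :
    weightOf K L W (mk L v hv) =
      finrank K (W.comap ((LinearMap.toSpanSingleton L (L × L) v).restrictScalars K)) := by
  set g := (LinearMap.toSpanSingleton L (L × L) v).restrictScalars K
  have hg : Function.Injective g := smul_left_injective L hv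
  have hrange : (mk L v hv).submodule.restrictScalars K = LinearMap.range g := by
    rw [submodule_mk, LinearMap.span_singleton_eq_range, LinearMap.range_restrictScalars]
  rw [weightOf, hrange, inf_comm, ← Submodule.map_comap_eq]
  exact (Submodule.equivMapOfInjective g hg _).finrank_eq.symm

theorem weightOf_graph_mk (f : L →ₗ[K] L) (x y : L) (hv : (x, y) ≠ 0) :
    weightOf K L f.graph (mk L (x, y) hv) =
      finrank K (LinearMap.ker (f ∘ₗ LinearMap.mulRight K x - LinearMap.mulRight K y)) := by
  have hcomap : f.graph.comap ((LinearMap.toSpanSingleton L (L × L) (x, y)).restrictScalars K) =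
      LinearMap.ker (f ∘ₗ LinearMap.mulRight K x - LinearMap.mulRight K y) := by
    ext c
    simp [LinearMap.mem_graph_iff, sub_eq_zero, eq_comm (a := c * y)]
  rw [weightOf_mk, hcomap]

theorem isLinearClub_graph (f : L →ₗ[K] L) (hker : LinearMap.ker f ≠ ⊥)
    (hf : ∀ x c : L, f x ≠ 0 → f (c * x) = c * f x → c ∈ Set.range (algebraMap K L)) :
    IsLinearClub f.graph (finrank K (LinearMap.ker f)) := by
  obtain ⟨x₀, hx₀, hx₀0⟩ := (Submodule.ne_bot_iff _).mp hker
  have h10 : ((1, 0) : L × L) ≠ 0 := by simp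
  refine ⟨mk L (1, 0) h10, ⟨(x₀, 0), by simpa using hx₀0, ?_, ?_⟩, ?_, ?_⟩
  · simpa [LinearMap.mem_graph_iff, eq_comm] using hx₀
  · exact (mk_eq_mk_iff' L _ _ _ _).mpr ⟨x₀⁻¹, by simp [hx₀0]⟩
  · have hhead : f ∘ₗ LinearMap.mulRight K 1 - LinearMap.mulRight K 0 = f := by
      ext
      simp
    rw [weightOf_graph_mk, hhead]
  · rintro P ⟨⟨x, y⟩, hv, hvW, rfl⟩ hPN
    rw [LinearMap.mem_graph_iff] at hvW
    obtain rfl : y = f x := hvW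
    have hfx : f x ≠ 0 := fun h0 => hPN ((mk_eq_mk_iff' L _ _ _ _).mpr ⟨x, by simp [h0]⟩)
    have hker1 : LinearMap.ker (f ∘ₗ LinearMap.mulRight K x - LinearMap.mulRight K (f x)) =
        K ∙ (1 : L) := by
      ext c
      simp only [LinearMap.mem_ker, LinearMap.sub_apply, LinearMap.comp_apply,
        LinearMap.mulRight_apply, sub_eq_zero, Submodule.mem_span_singleton]
      refine ⟨fun h => ?_, ?_⟩
      · obtain ⟨a, rfl⟩ := hf x c hfx h
        exact ⟨a, (Algebra.algebraMap_eq_smul_one a).symm⟩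
      · rintro ⟨a, rfl⟩
        simp
    rw [weightOf_graph_mk, hker1, finrank_span_singleton one_ne_zero]

end Club

section Frobenius

variable (K : Type*) {L : Type*} [Field K] [Fintype K] [Field L] [Algebra K L]

theorem finrank_le_of_forall_eval_eq_zero {V : Submodule K L} {P : L[X]} (hP : P ≠ 0)
    (hV : ∀ x ∈ V, P.eval x = 0) {m : ℕ} (hdeg : P.natDegree ≤ Fintype.card K ^ m) :
    finrank K V ≤ m := by
  classical
  have hsub : (V : Set L) ⊆ P.roots.toFinset := fun x hx => by simpa [hP] using hV x hx
  have : Fintype V := (P.roots.toFinset.finite_toSet.subset hsub).fintype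
  refine (Nat.pow_le_pow_iff_right (Fintype.one_lt_card (α := K))).mp ?_
  calc Fintype.card K ^ finrank K V = Fintype.card V := card_eq_pow_finrank.symm
    _ ≤ P.roots.toFinset.card := by simpa using Set.card_le_card hsub
    _ ≤ P.natDegree := P.roots.toFinset_card_le.trans (card_roots' P)
    _ ≤ Fintype.card K ^ m := hdeg

variable (L)

theorem frobeniusAlgHom_pow_apply (m : ℕ) (x : L) :
    (FiniteField.frobeniusAlgHom K L ^ m) x = x ^ Fintype.card K ^ m := by
  rw [AlgHom.coe_pow, FiniteField.coe_frobeniusAlgHom, pow_iterate]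

def frobFixedField (m : ℕ) : IntermediateField K L :=
  (AlgHom.equalizer (FiniteField.frobeniusAlgHom K L ^ m) (AlgHom.id K L)).toIntermediateField
    fun x hx => by simp_all [AlgHom.mem_equalizer, frobeniusAlgHom_pow_apply]

variable {K L}

theorem mem_frobFixedField {m : ℕ} {x : L} :
    x ∈ frobFixedField K L m ↔ x ^ Fintype.card K ^ m = x := by
  rw [← frobeniusAlgHom_pow_apply]
  exact AlgHom.mem_equalizer _ _ x

theorem finrank_frobFixedField_le {m : ℕ} (hm : m ≠ 0) : finrank K (frobFixedField K L m) ≤ m := by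
  rw [← IntermediateField.finrank_eq_finrank_subalgebra, ← Subalgebra.finrank_toSubmodule]
  refine finrank_le_of_forall_eval_eq_zero K
    (FiniteField.X_pow_card_pow_sub_X_ne_zero L hm Fintype.one_lt_card) (fun x hx => ?_)
    (FiniteField.X_pow_card_pow_sub_X_natDegree_eq L hm Fintype.one_lt_card).le
  simp [mem_frobFixedField.mp hx]

theorem frobFixedField_one [Finite L] : frobFixedField K L 1 = ⊥ := by
  rw [← IntermediateField.finrank_eq_one_iff]
  exact le_antisymm (finrank_frobFixedField_le one_ne_zero) Module.finrank_pos

theorem frobFixedField_le_of_dvd {m n : ℕ} (hmn : m ∣ n) :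
    frobFixedField K L m ≤ frobFixedField K L n := by
  obtain ⟨k, rfl⟩ := hmn
  intro x hx
  rw [mem_frobFixedField, ← frobeniusAlgHom_pow_apply, pow_mul, AlgHom.coe_pow]
  exact Function.iterate_fixed (by rwa [frobeniusAlgHom_pow_apply, ← mem_frobFixedField]) k

end Frobenius

section RelTrace

variable (K L : Type*) [Field K] [Fintype K] [Field L] [Algebra K L]

noncomputable def relTrace (t : ℕ) : L →ₗ[K] L :=
  ∑ j ∈ Finset.range (finrank K L / t), AlgHom.toEnd (FiniteField.frobeniusAlgHom K L ^ t) ^ j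

variable {K L}

theorem relTrace_apply (t : ℕ) (x : L) :
    relTrace K L t x = ∑ j ∈ Finset.range (finrank K L / t), x ^ Fintype.card K ^ (t * j) := by
  rw [relTrace, LinearMap.sum_apply]
  refine Finset.sum_congr rfl fun j _ => ?_
  rw [← map_pow, AlgHom.toEnd_apply, AlgHom.toLinearMap_apply, ← pow_mul,
    frobeniusAlgHom_pow_apply]

theorem relTrace_mul_of_mem {t : ℕ} {a : L} (ha : a ∈ frobFixedField K L t) (x : L) :
    relTrace K L t (a * x) = a * relTrace K L t x := by
  simp only [relTrace_apply, mul_pow, Finset.mul_sum]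
  refine Finset.sum_congr rfl fun j _ => ?_
  rw [mem_frobFixedField.mp (frobFixedField_le_of_dvd (dvd_mul_right t j) ha)]

variable [Finite L] {t : ℕ}

theorem relTrace_mem_frobFixedField (ht : t ∣ finrank K L) (x : L) :
    relTrace K L t x ∈ frobFixedField K L t := by
  set g := AlgHom.toEnd (FiniteField.frobeniusAlgHom K L ^ t)
  have hg : g ^ (finrank K L / t) = 1 := by
    rw [← map_pow, ← pow_mul, Nat.mul_div_cancel' ht, ← FiniteField.orderOf_frobeniusAlgHom,
      pow_orderOf_eq_one, map_one]
  have hfix : g * relTrace K L t = relTrace K L t := by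
    have := mul_geom_sum g (finrank K L / t)
    rwa [hg, sub_self, sub_mul, one_mul, sub_eq_zero] at this
  rw [mem_frobFixedField, ← frobeniusAlgHom_pow_apply]
  exact LinearMap.congr_fun hfix x

theorem finrank_ker_relTrace_le (ht : 0 < t) (htd : t ∣ finrank K L) :
    finrank K (LinearMap.ker (relTrace K L t)) ≤ finrank K L - t := by
  set q := Fintype.card K
  set P : L[X] := ∑ j ∈ Finset.range (finrank K L / t), X ^ q ^ (t * j)
  have hq : 1 < q := Fintype.one_lt_card
  have hs : 0 < finrank K L / t := Nat.div_pos (Nat.le_of_dvd finrank_pos htd) ht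
  have hP : P.coeff 1 = 1 := by
    simp only [P, finsetSum_coeff, coeff_X_pow]
    rw [Finset.sum_eq_single_of_mem 0 (Finset.mem_range.mpr hs)]
    · simp
    · intro j _ hj
      rw [if_neg (Nat.one_lt_pow (by positivity) hq).ne]
  refine finrank_le_of_forall_eval_eq_zero K (P := P) (fun h0 => by simp [h0] at hP)
    (fun x hx => by simpa [P, eval_finsetSum, relTrace_apply] using hx) ?_
  refine natDegree_sum_le_of_forall_le _ _ fun j hj => ?_
  rw [natDegree_X_pow]
  refine Nat.pow_le_pow_right hq.le ?_
  rw [Finset.mem_range] at hj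
  calc t * j ≤ t * (finrank K L / t - 1) := Nat.mul_le_mul_left t (by omega)
    _ = finrank K L - t := by rw [Nat.mul_sub_one, Nat.mul_div_cancel' htd]

theorem range_relTrace_le (ht : t ∣ finrank K L) :
    LinearMap.range (relTrace K L t) ≤ (frobFixedField K L t).toSubalgebra.toSubmodule := by
  rintro _ ⟨x, rfl⟩
  exact relTrace_mem_frobFixedField ht x

theorem finrank_ker_relTrace (ht : 0 < t) (htd : t ∣ finrank K L) :
    finrank K (LinearMap.ker (relTrace K L t)) = finrank K L - t := by
  have hrange := Submodule.finrank_mono (range_relTrace_le htd)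
  rw [Subalgebra.finrank_toSubmodule, IntermediateField.finrank_eq_finrank_subalgebra] at hrange
  have := finrank_frobFixedField_le (K := K) (L := L) ht.ne'
  have := finrank_ker_relTrace_le ht htd
  have := LinearMap.finrank_range_add_finrank_ker (relTrace K L t)
  omega

theorem range_relTrace (ht : 0 < t) (htd : t ∣ finrank K L) :
    LinearMap.range (relTrace K L t) = (frobFixedField K L t).toSubalgebra.toSubmodule := by
  refine Submodule.eq_of_le_of_finrank_le (range_relTrace_le htd) ?_
  rw [Subalgebra.finrank_toSubmodule, IntermediateField.finrank_eq_finrank_subalgebra]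
  have := finrank_frobFixedField_le (K := K) (L := L) ht.ne'
  have := finrank_ker_relTrace ht htd
  have := LinearMap.finrank_range_add_finrank_ker (relTrace K L t)
  have := Nat.le_of_dvd finrank_pos htd
  omega

end RelTrace

theorem Submodule.finrank_comap_of_le_range {R V W : Type*} [DivisionRing R] [AddCommGroup V]
    [Module R V] [AddCommGroup W] [Module R W] [FiniteDimensional R V] (f : V →ₗ[R] W)
    {S : Submodule R W} (hS : S ≤ LinearMap.range f) :
    finrank R (S.comap f) = finrank R S + finrank R (LinearMap.ker f) := by
  have h := LinearMap.finrank_range_add_finrank_ker (f.domRestrict (S.comap f))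
  rwa [LinearMap.range_domRestrict, Submodule.map_comap_eq, inf_of_le_right hS,
    LinearMap.ker_domRestrict,
    (Submodule.comapSubtypeEquivOfLe (LinearMap.ker_le_comap f)).finrank_eq, eq_comm] at h

section ClubMap

variable (K L : Type*) [Field K] [Fintype K] [Field L] [Algebra K L]

noncomputable def clubMap (t : ℕ) (c : K) : L →ₗ[K] L :=
  ((FiniteField.frobeniusAlgHom K L).toLinearMap - c • LinearMap.id) ∘ₗ relTrace K L t

variable {K L} {t : ℕ}

theorem clubMap_apply (c : K) (x : L) :
    clubMap K L t c x = relTrace K L t x ^ Fintype.card K - c • relTrace K L t x := rfl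

variable [Finite L]

theorem mem_range_algebraMap_of_clubMap_mul (ht : t ∣ finrank K L) (c : K) {x a : L}
    (hx : clubMap K L t c x ≠ 0) (ha : clubMap K L t c (a * x) = a * clubMap K L t c x) :
    a ∈ Set.range (algebraMap K L) := by
  have hmem (z : L) : clubMap K L t c z ∈ frobFixedField K L t := by
    have hz := relTrace_mem_frobFixedField ht z
    exact sub_mem (pow_mem hz _) (IntermediateField.smul_mem _ hz)
  have haF : a ∈ frobFixedField K L t := by
    rw [eq_div_of_mul_eq hx ha.symm]
    exact div_mem (hmem _) (hmem x)
  have hTx : relTrace K L t x ≠ 0 := fun h0 => hx (by simp [clubMap_apply, h0])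
  rw [clubMap_apply, clubMap_apply, relTrace_mul_of_mem haF, Algebra.smul_def,
    Algebra.smul_def] at ha
  have hfix : a ^ Fintype.card K = a := by
    apply mul_right_cancel₀ (pow_ne_zero (Fintype.card K) hTx)
    linear_combination ha
  rw [← IntermediateField.mem_bot, ← frobFixedField_one, mem_frobFixedField, pow_one]
  exact hfix

theorem finrank_ker_clubMap_zero (ht : 0 < t) (htd : t ∣ finrank K L) :
    finrank K (LinearMap.ker (clubMap K L t 0)) = finrank K L - t := by
  rw [clubMap, zero_smul, sub_zero, LinearMap.ker_comp_of_ker_eq_bot _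
    (LinearMap.ker_eq_bot.mpr (FiniteField.frobeniusAlgHom K L).toRingHom.injective),
    finrank_ker_relTrace ht htd]

theorem finrank_ker_clubMap_one (ht : 0 < t) (htd : t ∣ finrank K L) :
    finrank K (LinearMap.ker (clubMap K L t 1)) = finrank K L - t + 1 := by
  have hker :
      LinearMap.ker ((FiniteField.frobeniusAlgHom K L).toLinearMap - (1 : K) • LinearMap.id) =
        (frobFixedField K L 1).toSubalgebra.toSubmodule := by
    ext y
    simp [sub_eq_zero, mem_frobFixedField]
  have hle :
      (frobFixedField K L 1).toSubalgebra.toSubmodule ≤ LinearMap.range (relTrace K L t) := by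
    rw [range_relTrace ht htd]
    exact frobFixedField_le_of_dvd (one_dvd t)
  rw [clubMap, LinearMap.ker_comp, hker, Submodule.finrank_comap_of_le_range _ hle,
    finrank_ker_relTrace ht htd, Subalgebra.finrank_toSubmodule,
    IntermediateField.finrank_eq_finrank_subalgebra, frobFixedField_one,
    IntermediateField.finrank_bot]
  omega

end ClubMap

theorem stmt10_general (K L : Type*) [Field K] [Field L] [Algebra K L] [Fintype K]
    (h i : ℕ) (hi : 1 ≤ i) (hih : i < h) (hrank : Module.finrank K L = h)
    (hdvd : (h - i) ∣ h ∨ (h - i + 1) ∣ h) :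
    ∃ W : Submodule K (L × L), Module.finrank K W = h ∧
      ∃ N ∈ linearSetOf K L W, weightOf K L W N = i ∧
        ∀ P ∈ linearSetOf K L W, P ≠ N → weightOf K L W P = 1 := by
  have : FiniteDimensional K L := .of_finrank_pos (by omega)
  have : Finite L := Module.finite_of_finite K
  obtain ⟨t, c, ht, htd, hker⟩ : ∃ (t : ℕ) (c : K), 0 < t ∧ t ∣ h ∧
      finrank K (LinearMap.ker (clubMap K L t c)) = i := by
    subst hrank
    rcases hdvd with htd | htd
    · exact ⟨_, 0, by omega, htd, by rw [finrank_ker_clubMap_zero (by omega) htd]; omega⟩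
    · exact ⟨_, 1, by omega, htd, by rw [finrank_ker_clubMap_one (by omega) htd]; omega⟩
  have hbot : LinearMap.ker (clubMap K L t c) ≠ ⊥ := fun h0 => by
    rw [h0, finrank_bot] at hker
    omega
  refine ⟨(clubMap K L t c).graph, (LinearMap.finrank_graph _).trans hrank, ?_⟩
  rw [← hker]
  exact isLinearClub_graph _ hbot fun _ _ => mem_range_algebraMap_of_clubMap_mul (hrank ▸ htd) c

/-- if `(h - i) ∣ h` or `(h - i + 1) ∣ h` (with `1 ≤ i < h`), then there
exists an `F_q`-linear `i`-club of rank `h` in `PG(1, q^h)`, i.e. a linear set of rank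
`h` with exactly one point of weight `i` (the head) and all other points of weight 1. -/
theorem stmt10 (K L : Type*) [Field K] [Field L] [Algebra K L] [Fintype K] [Fintype L]
    (h i : ℕ) (hi : 1 ≤ i) (hih : i < h) (hrank : Module.finrank K L = h)
    (hdvd : (h - i) ∣ h ∨ (h - i + 1) ∣ h) :
    ∃ W : Submodule K (L × L), Module.finrank K W = h ∧
      ∃ N ∈ linearSetOf K L W, weightOf K L W N = i ∧
        ∀ P ∈ linearSetOf K L W, P ≠ N → weightOf K L W P = 1 :=
  stmt10_general K L h i hi hih hrank hdvd
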